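/- arXiv:2210.03550 — 7 statements merged into one kernel-verified Lean document; each statement's English description precedes it below -/
import Mathlib

section
/- Let C be an abelian category, X ⊆ Y ⊆ C two classes of objects closed under extensions, ω ⊆ X a relative generator in X (i.e. every X₀ ∈ X admits a short exact sequence 0 → X' → W → X₀ → 0 with W ∈ ω, X' ∈ X), and 0 ∈ X. Then for any object Z admitting a finite X_Y-coresolution of length n (i.e. exact sequences realizing coresdim with cokernels in X and terms in Y), there exists a short exact sequence 0 → Z → M_Z → C_Z → 0 with M_Z ∈ X and C_Z admitting a finite ω_Y-coresolution of length n−1. -/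
open CategoryTheory CategoryTheory.Limits CategoryTheory.Abelian ZeroObject

universe w v u

namespace RelTilting

variable {C : Type u} [Category.{v} C] [Abelian C]

/-- `f`, `g` form a short exact sequence `0 → A → B → D → 0`. -/
def IsSES {A B D : C} (f : A ⟶ B) (g : B ⟶ D) : Prop :=
  ∃ w : f ≫ g = 0, (ShortComplex.mk f g w).ShortExact

/-- There is a short exact sequence `0 → A → B → D → 0`. -/
def SES (A B D : C) : Prop := ∃ (f : A ⟶ B) (g : B ⟶ D), IsSES f g

/-- A class of objects is closed under extensions. -/
def ExtClosed (P : C → Prop) : Prop :=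
  ∀ ⦃A B D : C⦄, SES A B D → P A → P D → P B

/-- A class of objects is closed under direct summands. -/
def SmdClosed (P : C → Prop) : Prop :=
  ∀ (A V : C), P V → (∃ (i : A ⟶ V) (r : V ⟶ A), i ≫ r = 𝟙 A) → P A

/-- A class of objects is closed under finite (binary) direct sums. -/
def SumClosed (P : C → Prop) : Prop :=
  ∀ (A B : C), P A → P B → P (A ⊞ B)

/-- A class is closed under CoCones (kernels of epis between its objects). -/
def CoConeClosed (P : C → Prop) : Prop :=
  ∀ ⦃A B D : C⦄, SES A B D → P B → P D → P A

/-- A class is left thick. -/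
def LeftThick (P : C → Prop) : Prop :=
  ExtClosed P ∧ SmdClosed P ∧ CoConeClosed P

variable [HasExt.{w} C]

/-- `Ext^i(A,B) = 0` for all `i ≥ 1`. -/
def extVanish (A B : C) : Prop := ∀ i : ℕ, 1 ≤ i → Subsingleton (Ext A B i)

/-- The right orthogonal class `T^⊥`. -/
def rightPerp (T : C → Prop) : C → Prop := fun B => ∀ A, T A → extVanish A B

/-- The left orthogonal class `^⊥S`. -/
def leftPerp (S : C → Prop) : C → Prop := fun A => ∀ B, S B → extVanish A B

/-- `pd_X(M) ≤ n`. -/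
def pdLE (T X : C → Prop) (n : ℕ) : Prop :=
  ∀ M, T M → ∀ X', X X' → ∀ k, n < k → Subsingleton (Ext M X' k)

/-- `M` has a finite coresolution of length `n` with middle terms in `B`
and cokernels in `A`, ending in `A ∩ B`. -/
def CoresLen (B A : C → Prop) : ℕ → C → Prop
  | 0 => fun M => B M ∧ A M
  | (n+1) => fun M => ∃ Y0 N0 : C, B Y0 ∧ A N0 ∧ SES M Y0 N0 ∧ CoresLen B A n N0

/-- The coresolution dimension of `M` (with middle terms in `B`,
cokernels in `A`) equals `n`. -/
def CoresDimEq (B A : C → Prop) (M : C) (n : ℕ) : Prop :=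
  CoresLen B A n M ∧ ∀ m : ℕ, m < n → ¬ CoresLen B A m M

/-- Specification of an infinite coresolution of `M` with middle terms `Yk`
(in `B ∪ {0}`) and cokernels `Nk` (in `A ∪ {0}`). -/
def InfCoresSpec (B A : C → Prop) (M : C) (Yk Nk : ℕ → C) : Prop :=
  (∀ k, B (Yk k) ∨ IsZero (Yk k)) ∧ (∀ k, A (Nk k) ∨ IsZero (Nk k)) ∧
    SES M (Yk 0) (Nk 0) ∧ ∀ k, SES (Nk k) (Yk (k+1)) (Nk (k+1))

/-- `M` has a (possibly infinite) coresolution with middle terms in `B ∪ {0}`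
and cokernels in `A ∪ {0}`. -/
def InfCores (B A : C → Prop) (M : C) : Prop :=
  ∃ Yk Nk : ℕ → C, InfCoresSpec B A M Yk Nk

/-- The class `(A,B)^∨_∞`. -/
def PairVeeInf (A B : C → Prop) (M : C) : Prop := A M ∧ InfCores B A M

/-- `coresdim^A_B(M) ≤ n`, via infinite coresolutions vanishing beyond `n`. -/
def InfCoresDimLE (B A : C → Prop) (M : C) (n : ℕ) : Prop :=
  ∃ Yk Nk : ℕ → C, InfCoresSpec B A M Yk Nk ∧ ∀ k, n < k → IsZero (Yk k)

/-- The class `T^∨` of objects with a finite coresolution by objects of `T`. -/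
def Vee (T : C → Prop) : C → Prop := fun M => ∃ n, CoresLen T (fun _ => True) n M

/-- The class `T^∨_X`. -/
def VeeRel (T X : C → Prop) : C → Prop := fun M => ∃ n, CoresLen T X n M

/-- `ω` is a relative generator in `X`. -/
def RelGen (ω X : C → Prop) : Prop :=
  (∀ W, ω W → X W) ∧ ∀ X0, X X0 → ∃ X' W : C, X X' ∧ ω W ∧ SES X' W X0

/-- `α` is a relative cogenerator in `X`. -/
def RelCogen (α X : C → Prop) : Prop :=
  (∀ I, α I → X I) ∧ ∀ X0, X X0 → ∃ I X' : C, α I ∧ X X' ∧ SES X0 I X'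

/-- `f : T' ⟶ Z` is a `T`-precover of `Z`. -/
def IsPrecover (T : C → Prop) {T' Z : C} (f : T' ⟶ Z) : Prop :=
  T T' ∧ ∀ T'' : C, T T'' → ∀ h : T'' ⟶ Z, ∃ k : T'' ⟶ T', k ≫ f = h

/-- `g : Z ⟶ M` is an `X`-preenvelope of `Z`. -/
def IsPreenvelope (X : C → Prop) {Z M : C} (g : Z ⟶ M) : Prop :=
  X M ∧ ∀ X' : C, X X' → ∀ h : Z ⟶ X', ∃ k : M ⟶ X', g ≫ k = h

/-- The class `Fac^X_n(T)`. -/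
def Fac (T X : C → Prop) : ℕ → C → Prop
  | 0 => fun _ => True
  | (n+1) => fun M => ∃ K T1 : C, X K ∧ (T T1 ∧ X T1) ∧ SES K T1 M ∧ Fac T X n K

/-- `Y` is closed by `n`-quotients in `X`. -/
def ClosedByNQuotients (Y X : C → Prop) (n : ℕ) : Prop :=
  ∀ (K Ymid : ℕ → C), X (K 0) →
    (∀ i, 1 ≤ i → i ≤ n → Y (Ymid i) ∧ X (K i) ∧ SES (K i) (Ymid i) (K (i-1))) →
    Y (K 0)



set_option linter.unusedSectionVars false

section Helpers

lemma isSES_biprod (A B : C) :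
    IsSES (biprod.inl : A ⟶ A ⊞ B) (biprod.snd : A ⊞ B ⟶ B) := by
  refine ⟨by simp, ?_⟩
  exact (ShortComplex.Splitting.mk (S := ShortComplex.mk (biprod.inl : A ⟶ A ⊞ B)
    (biprod.snd : A ⊞ B ⟶ B) (by simp)) (r := biprod.fst) (s := biprod.inr)
    (by simp) (by simp) (by simp [biprod.total])).shortExact

/-- Kernel of the first projection of a pullback along an epi `g` is `ker g`. -/
lemma SES_pullback_fst {A B D K : C} (f : A ⟶ D) (g : B ⟶ D) [Epi g]
    (k : K ⟶ B) (w : k ≫ g = 0)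
    (hk : (ShortComplex.mk k g w).ShortExact) :
    IsSES (pullback.lift (0 : K ⟶ A) k (by rw [zero_comp, w]) : K ⟶ pullback f g)
      (pullback.fst f g) := by
  haveI : Mono k := hk.mono_f
  set ι : K ⟶ pullback f g := pullback.lift (0 : K ⟶ A) k (by rw [zero_comp, w]) with hι
  have hιfst : ι ≫ pullback.fst f g = 0 := pullback.lift_fst _ _ _
  have hιsnd : ι ≫ pullback.snd f g = k := pullback.lift_snd _ _ _
  haveI : Mono ι := mono_of_mono_fac hιsnd
  refine ⟨hιfst, ShortComplex.ShortExact.mk' ?_ ‹Mono ι› ?_⟩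
  swap
  · exact inferInstanceAs (Epi (pullback.fst f g))
  apply ShortComplex.exact_of_f_is_kernel
  have hlift : ∀ {T : C} (x : T ⟶ pullback f g), x ≫ pullback.fst f g = 0 →
      { l : T ⟶ K // l ≫ ι = x } := by
    intro T x hx
    have h2 : (x ≫ pullback.snd f g) ≫ g = 0 := by
      rw [Category.assoc, ← pullback.condition, ← Category.assoc, hx, zero_comp]
    obtain ⟨l, hl⟩ := Fork.IsLimit.lift' hk.fIsKernel (x ≫ pullback.snd f g) (by simpa using h2)
    simp only [Fork.ι_ofι] at hl
    refine ⟨l, ?_⟩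
    apply pullback.hom_ext
    · rw [Category.assoc, hιfst, comp_zero, hx]
    · rw [Category.assoc, hιsnd]; exact hl
  refine KernelFork.IsLimit.ofι ι hιfst (fun x hx => (hlift x hx).1)
    (fun x hx => (hlift x hx).2) (fun x hx m hm => ?_)
  rw [← cancel_mono ι, hm, (hlift x hx).2]

/-- Kernel of the second projection of a pullback along an epi `f` is `ker f`. -/
lemma SES_pullback_snd {A B D K : C} (f : A ⟶ D) (g : B ⟶ D) [Epi f]
    (k : K ⟶ A) (w : k ≫ f = 0)
    (hk : (ShortComplex.mk k f w).ShortExact) :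
    IsSES (pullback.lift k (0 : K ⟶ B) (by rw [zero_comp, w]) : K ⟶ pullback f g)
      (pullback.snd f g) := by
  haveI : Mono k := hk.mono_f
  set ι : K ⟶ pullback f g := pullback.lift k (0 : K ⟶ B) (by rw [zero_comp, w]) with hι
  have hιsnd : ι ≫ pullback.snd f g = 0 := pullback.lift_snd _ _ _
  have hιfst : ι ≫ pullback.fst f g = k := pullback.lift_fst _ _ _
  haveI : Mono ι := mono_of_mono_fac hιfst
  refine ⟨hιsnd, ShortComplex.ShortExact.mk' ?_ ‹Mono ι› ?_⟩
  swap
  · exact inferInstanceAs (Epi (pullback.snd f g))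
  apply ShortComplex.exact_of_f_is_kernel
  have hlift : ∀ {T : C} (x : T ⟶ pullback f g), x ≫ pullback.snd f g = 0 →
      { l : T ⟶ K // l ≫ ι = x } := by
    intro T x hx
    have h2 : (x ≫ pullback.fst f g) ≫ f = 0 := by
      rw [Category.assoc, pullback.condition, ← Category.assoc, hx, zero_comp]
    obtain ⟨l, hl⟩ := Fork.IsLimit.lift' hk.fIsKernel (x ≫ pullback.fst f g) (by simpa using h2)
    simp only [Fork.ι_ofι] at hl
    refine ⟨l, ?_⟩
    apply pullback.hom_ext
    · rw [Category.assoc, hιfst]; exact hl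
    · rw [Category.assoc, hιsnd, comp_zero, hx]
  refine KernelFork.IsLimit.ofι ι hιsnd (fun x hx => (hlift x hx).1)
    (fun x hx => (hlift x hx).2) (fun x hx m hm => ?_)
  rw [← cancel_mono ι, hm, (hlift x hx).2]

/-- Pulling back a mono `u = ker v` along an epi `q` gives a SES `P → B → coker u`. -/
lemma SES_pullback_coker {A B D K : C} (u : K ⟶ A) (v : A ⟶ D) (w : u ≫ v = 0)
    (hu : (ShortComplex.mk u v w).ShortExact) (q : B ⟶ A) [Epi q] :
    IsSES (pullback.snd u q) (q ≫ v) := by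
  haveI : Mono u := hu.mono_f
  haveI : Epi v := hu.epi_g
  have hw : pullback.snd u q ≫ q ≫ v = 0 := by
    rw [← Category.assoc, ← pullback.condition, Category.assoc, w, comp_zero]
  refine ⟨hw, ShortComplex.ShortExact.mk' ?_ inferInstance (epi_comp q v)⟩
  apply ShortComplex.exact_of_f_is_kernel
  have hlift : ∀ {T : C} (x : T ⟶ B), x ≫ (q ≫ v) = 0 →
      { l : T ⟶ pullback u q // l ≫ pullback.snd u q = x } := by
    intro T x hx
    have h2 : (x ≫ q) ≫ v = 0 := by rw [Category.assoc]; exact hx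
    obtain ⟨l, hl⟩ := Fork.IsLimit.lift' hu.fIsKernel (x ≫ q) (by simpa using h2)
    simp only [Fork.ι_ofι] at hl
    exact ⟨pullback.lift l x hl, pullback.lift_snd _ _ _⟩
  refine KernelFork.IsLimit.ofι _ hw (fun x hx => (hlift x hx).1)
    (fun x hx => (hlift x hx).2) (fun x hx m hm => ?_)
  rw [← cancel_mono (pullback.snd u q), hm, (hlift x hx).2]

end Helpers

theorem stmt0 (X Y ω : C → Prop)
    (hXY : ∀ A, X A → Y A) (hXext : ExtClosed X) (hYext : ExtClosed Y)
    (hgen : RelGen ω X) (h0 : X (0 : C)) :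
    ∀ (Z : C) (n : ℕ), CoresDimEq X Y Z n →
      ∃ (M Cz : C) (g : Z ⟶ M) (p : M ⟶ Cz),
        IsSES g p ∧ X M ∧ CoresLen ω Y (n - 1) Cz := by
  have main : ∀ (n : ℕ) (Z : C), CoresLen X Y n Z →
      ∃ (M Cz : C) (g : Z ⟶ M) (p : M ⟶ Cz),
        IsSES g p ∧ X M ∧ Y Cz ∧ CoresLen ω Y (n - 1) Cz := by
    intro n
    induction n with
    | zero =>
      intro Z hZ
      obtain ⟨hXZ, hYZ⟩ := hZ
      obtain ⟨X', W, hX', hW, -⟩ := hgen.2 0 h0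
      have hYW : Y W := hXY W (hgen.1 W hW)
      refine ⟨Z ⊞ W, W, biprod.inl, biprod.snd, isSES_biprod Z W,
        hXext ⟨biprod.inl, biprod.snd, isSES_biprod Z W⟩ hXZ (hgen.1 W hW),
        hYW, ?_⟩
      exact ⟨hW, hYW⟩
    | succ n ih =>
      intro Z hZ
      obtain ⟨Y0, N0, hY0, hN0Y, ⟨i, π, wZ, hZse⟩, hN0⟩ := hZ
      haveI : Epi π := hZse.epi_g
      cases n with
      | zero =>
        obtain ⟨hXN0, hYN0⟩ := hN0
        obtain ⟨X1, W, hX1, hW, x, q, wq, hqse⟩ := hgen.2 N0 hXN0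
        haveI : Epi q := hqse.epi_g
        have h1 := SES_pullback_fst q π i wZ hZse
        have h2 := SES_pullback_snd q π x wq hqse
        have hYW : Y W := hXY W (hgen.1 W hW)
        refine ⟨pullback q π, W, _, _, h1,
          hXext ⟨_, _, h2⟩ hX1 hY0, hYW, ?_⟩
        exact ⟨hW, hYW⟩
      | succ m =>
        obtain ⟨M', C', u, v, ⟨wv, hvse⟩, hXM', hYC', hC'⟩ := ih N0 hN0
        obtain ⟨X1, W, hX1, hW, x, q, wq, hqse⟩ := hgen.2 M' hXM'
        haveI : Epi q := hqse.epi_g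
        have hQ1 := SES_pullback_fst u q x wq hqse
        have hQ2 := SES_pullback_coker u v wv hvse q
        obtain ⟨wQ1, hQ1se⟩ := id hQ1
        haveI : Epi (pullback.fst u q) := inferInstance
        have hE1 := SES_pullback_fst (pullback.fst u q) π i wZ hZse
        have hE2 := SES_pullback_snd (pullback.fst u q) π _ wQ1 hQ1se
        have hYQ : Y (pullback u q) := hYext ⟨_, _, hQ1⟩ (hXY X1 hX1) hN0Y
        refine ⟨pullback (pullback.fst u q) π, pullback u q, _, _, hE1,
          hXext ⟨_, _, hE2⟩ hX1 hY0, hYQ, ?_⟩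
        exact ⟨W, C', hW, hYC', ⟨_, _, hQ2⟩, hC'⟩
  intro Z n hZ
  obtain ⟨M, Cz, g, p, h1, h2, -, h4⟩ := main n Z hZ.1
  exact ⟨M, Cz, g, p, h1, h2, h4⟩


end RelTilting
end

section
/- Let C be an abelian category, X ⊆ Y ⊆ C closed under extensions, ω ⊆ X a relative generator in X, and 0 ∈ X. Then for any object Z with coresdim^Y_X(Z) = n < ∞, there exists a short exact sequence 0 → K_Z → B_Z → Z → 0 with K_Z ∈ X and B_Z admitting a finite ω_Y-coresolution of length at most n. -/
open CategoryTheory CategoryTheory.Limits CategoryTheory.Abelian ZeroObject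

universe w v u

namespace RelTilting

variable {C : Type u} [Category.{v} C] [Abelian C]

variable [HasExt.{w} C]

section Aux

lemma mk_isSES {A B D : C} {f : A ⟶ B} {g : B ⟶ D} (w : f ≫ g = 0)
    (hex : (ShortComplex.mk f g w).Exact) (hm : Mono f) (he : Epi g) : IsSES f g :=
  ⟨w, { exact := hex, mono_f := hm, epi_g := he }⟩

/-- Pulling back a short exact sequence `0 → A → B → D → 0` along `h : E → D`
gives a short exact sequence `0 → A → B ×_D E → E → 0`. -/
lemma pb_ses_snd {A B D E : C} {f : A ⟶ B} {g : B ⟶ D} {w : f ≫ g = 0}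
    (hse : (ShortComplex.mk f g w).ShortExact) (h : E ⟶ D) :
    IsSES (pullback.lift f 0 (by rw [w, zero_comp]) : A ⟶ pullback g h)
      (pullback.snd g h) := by
  haveI := hse.mono_f
  haveI := hse.epi_g
  have w' : (pullback.lift f 0 (by rw [w, zero_comp]) : A ⟶ pullback g h) ≫
      pullback.snd g h = 0 := pullback.lift_snd _ _ _
  have hmono : Mono (pullback.lift f 0 (by rw [w, zero_comp]) : A ⟶ pullback g h) :=
    mono_of_mono_fac (pullback.lift_fst f 0 _)
  refine mk_isSES w' (ShortComplex.exact_of_f_is_kernel _ ?_) hmono inferInstance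
  refine KernelFork.IsLimit.ofι _ _
    (fun {T} t ht => hse.exact.lift (t ≫ pullback.fst g h)
      (by rw [Category.assoc, pullback.condition, ← Category.assoc, ht, zero_comp]))
    (fun {T} t ht => ?_) (fun {T} t ht m hm => ?_)
  · apply pullback.hom_ext
    · rw [Category.assoc, pullback.lift_fst]
      exact hse.exact.lift_f _ _
    · rw [Category.assoc, pullback.lift_snd, comp_zero, ht]
  · rw [← cancel_mono f]
    have h1 : m ≫ (pullback.lift f 0 (by rw [w, zero_comp]) : A ⟶ pullback g h) ≫
        pullback.fst g h = t ≫ pullback.fst g h := by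
      rw [← Category.assoc, hm]
    rw [pullback.lift_fst] at h1
    rw [h1]
    exact (hse.exact.lift_f _ _).symm

/-- Pulling back a short exact sequence `0 → A → B → D → 0` along `h : E → D`
gives a short exact sequence `0 → A → E ×_D B → E → 0` (mirror version). -/
lemma pb_ses_fst {A B D E : C} {f : A ⟶ B} {g : B ⟶ D} {w : f ≫ g = 0}
    (hse : (ShortComplex.mk f g w).ShortExact) (h : E ⟶ D) :
    IsSES (pullback.lift 0 f (by rw [w, zero_comp]) : A ⟶ pullback h g)
      (pullback.fst h g) := by
  haveI := hse.mono_f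
  haveI := hse.epi_g
  have w' : (pullback.lift 0 f (by rw [w, zero_comp]) : A ⟶ pullback h g) ≫
      pullback.fst h g = 0 := pullback.lift_fst _ _ _
  have hmono : Mono (pullback.lift 0 f (by rw [w, zero_comp]) : A ⟶ pullback h g) :=
    mono_of_mono_fac (pullback.lift_snd 0 f _)
  refine mk_isSES w' (ShortComplex.exact_of_f_is_kernel _ ?_) hmono inferInstance
  refine KernelFork.IsLimit.ofι _ _
    (fun {T} t ht => hse.exact.lift (t ≫ pullback.snd h g)
      (by rw [Category.assoc, ← pullback.condition, ← Category.assoc, ht, zero_comp]))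
    (fun {T} t ht => ?_) (fun {T} t ht m hm => ?_)
  · apply pullback.hom_ext
    · rw [Category.assoc, pullback.lift_fst, comp_zero, ht]
    · rw [Category.assoc, pullback.lift_snd]
      exact hse.exact.lift_f _ _
  · rw [← cancel_mono f]
    have h1 : m ≫ (pullback.lift 0 f (by rw [w, zero_comp]) : A ⟶ pullback h g) ≫
        pullback.snd h g = t ≫ pullback.snd h g := by
      rw [← Category.assoc, hm]
    rw [pullback.lift_snd] at h1
    rw [h1]
    exact (hse.exact.lift_f _ _).symm

/-- If `0 → Z → E → B' → 0` is exact (`i`, `q`) and `p : W ⟶ E` is epi, then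
`0 → W ×_E Z → W → B' → 0` is exact. -/
lemma ker_comp_ses {Z E B' W : C} {i : Z ⟶ E} {q : E ⟶ B'} {w : i ≫ q = 0}
    (hse : (ShortComplex.mk i q w).ShortExact) (p : W ⟶ E) [Epi p] :
    IsSES (pullback.fst p i) (p ≫ q) := by
  haveI := hse.mono_f
  haveI := hse.epi_g
  have w' : pullback.fst p i ≫ p ≫ q = 0 := by
    rw [← Category.assoc, pullback.condition, Category.assoc, w, comp_zero]
  refine mk_isSES w' (ShortComplex.exact_of_f_is_kernel _ ?_) inferInstance inferInstance
  refine KernelFork.IsLimit.ofι _ _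
    (fun {T} t ht => pullback.lift t (hse.exact.lift (t ≫ p) (by rw [Category.assoc]; exact ht))
      (by rw [hse.exact.lift_f]))
    (fun {T} t ht => pullback.lift_fst _ _ _) (fun {T} t ht m hm => ?_)
  apply pullback.hom_ext
  · rw [pullback.lift_fst, hm]
  · rw [pullback.lift_snd, ← cancel_mono i, hse.exact.lift_f, Category.assoc,
      ← pullback.condition, ← Category.assoc, hm]

/-- The key induction: Auslander-Buchweitz style approximation. -/
lemma key_approx (X Y ω : C → Prop)
    (hXY : ∀ A, X A → Y A) (hXext : ExtClosed X) (hYext : ExtClosed Y)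
    (hgen : RelGen ω X) :
    ∀ (n : ℕ) (Z : C), CoresLen X Y n Z →
      ∃ K B : C, SES K B Z ∧ X K ∧ (Y Z → Y B) ∧ ∃ m ≤ n, CoresLen ω Y m B := by
  intro n
  induction n with
  | zero =>
    intro Z hZ
    obtain ⟨X', W, hX', hW, hses⟩ := hgen.2 Z hZ.1
    exact ⟨X', W, hses, hX', fun _ => hXY W (hgen.1 W hW), 0, le_refl 0, hW,
      hXY W (hgen.1 W hW)⟩
  | succ n ih =>
    intro Z hZ
    obtain ⟨Y0, N0, hY0, hN0, ⟨f0, g0, w0, hse0⟩, hcor⟩ := hZ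
    obtain ⟨K', B', ⟨f1, g1, w1, hse1⟩, hK', hYB', m, hm, hB'cor⟩ := ih N0 hcor
    have hYB'' : Y B' := hYB' hN0
    -- E := pullback g0 g1 fits in 0 → Z → E → B' → 0 and 0 → K' → E → Y0 → 0
    have hZEB : IsSES (pullback.lift f0 0 (by rw [w0, zero_comp]) : Z ⟶ pullback g0 g1)
        (pullback.snd g0 g1) := pb_ses_snd hse0 g1
    have hKEY : IsSES (pullback.lift 0 f1 (by rw [w1, zero_comp]) : K' ⟶ pullback g0 g1)
        (pullback.fst g0 g1) := pb_ses_fst hse1 g0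
    have hE : X (pullback g0 g1) := hXext ⟨_, _, hKEY⟩ hK' hY0
    obtain ⟨X'', W, hX'', hW, ⟨f2, p, w2, hse2⟩⟩ := hgen.2 _ hE
    haveI := hse2.epi_g
    obtain ⟨wq, hseZEB⟩ := hZEB
    -- P := pullback p i fits in 0 → X'' → P → Z → 0 and 0 → P → W → B' → 0
    have hXPZ := pb_ses_snd hse2 (pullback.lift f0 0 (by rw [w0, zero_comp]) :
      Z ⟶ pullback g0 g1)
    have hPWB := ker_comp_ses hseZEB p
    refine ⟨X'', _, ⟨_, _, hXPZ⟩, hX'',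
      fun hYZ => hYext ⟨_, _, hXPZ⟩ (hXY X'' hX'') hYZ,
      m + 1, Nat.succ_le_succ hm, W, B', hW, hYB'', ⟨_, _, hPWB⟩, hB'cor⟩

end Aux

theorem stmt1 (X Y ω : C → Prop)
    (hXY : ∀ A, X A → Y A) (hXext : ExtClosed X) (hYext : ExtClosed Y)
    (hgen : RelGen ω X) (h0 : X (0 : C)) :
    ∀ (Z : C) (n : ℕ), CoresDimEq X Y Z n →
      ∃ K B : C, SES K B Z ∧ X K ∧ ∃ m ≤ n, CoresLen ω Y m B := by
  intro Z n hZ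
  obtain ⟨K, B, h1, h2, _, hm⟩ := key_approx X Y ω hXY hXext hYext hgen n Z hZ.1
  exact ⟨K, B, h1, h2, hm⟩

end RelTilting
end

section
/- Let C be an abelian category and X, Y ⊆ C classes of objects such that X is closed under direct summands and (X,Y)^∨_∞ is closed under extensions. Then (X,Y)^∨_∞ is closed under direct summands. -/
open CategoryTheory CategoryTheory.Limits CategoryTheory.Abelian ZeroObject

universe w v u

namespace RelTilting

variable {C : Type u} [Category.{v} C] [Abelian C]

variable [HasExt.{w} C]

section Stmt4Aux

lemma isSES_iso_left {U W Yo D : C} (e : U ≅ W) {f : W ⟶ Yo} {g : Yo ⟶ D}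
    (h : IsSES f g) : IsSES (e.hom ≫ f) g := by
  obtain ⟨w, hse⟩ := h
  refine ⟨by rw [Category.assoc, w, comp_zero], ?_⟩
  exact ShortComplex.shortExact_of_iso (S₁ := ShortComplex.mk f g w)
    (ShortComplex.isoMk e.symm (Iso.refl _) (Iso.refl _) (by simp) (by simp)) hse

lemma pairVeeInf_tail (X Y : C → Prop) {M : C} {Yk Nk : ℕ → C}
    (h : InfCoresSpec Y X M Yk Nk) (hX : X (Nk 0)) : PairVeeInf X Y (Nk 0) :=
  ⟨hX, fun k => Yk (k + 1), fun k => Nk (k + 1), fun k => h.1 (k + 1),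
    fun k => h.2.1 (k + 1), h.2.2.2 0, fun k => h.2.2.2 (k + 1)⟩

lemma pairVeeInf_iso (X Y : C → Prop) (hXsmd : SmdClosed X) {U W : C} (e : U ≅ W)
    (h : PairVeeInf X Y W) : PairVeeInf X Y U := by
  obtain ⟨hXW, Yk, Nk, h1, h2, ⟨f, g, hses⟩, h4⟩ := h
  exact ⟨hXsmd U W hXW ⟨e.hom, e.inv, e.hom_inv_id⟩,
    Yk, Nk, h1, h2, ⟨e.hom ≫ f, g, isSES_iso_left e hses⟩, h4⟩

lemma step_aux (X Y : C → Prop) (hXsmd : SmdClosed X)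
    (hext : ExtClosed (PairVeeInf X Y)) {A' W : C} (hW : PairVeeInf X Y W)
    (i : A' ⟶ W) (r : W ⟶ A') (hir : i ≫ r = 𝟙 A') :
    ∃ Yc Cc : C, (Y Yc ∨ IsZero Yc) ∧ X Cc ∧ SES A' Yc Cc ∧
      PairVeeInf X Y (Cc ⊞ A') := by
  obtain ⟨hXW, Yk, Nk, hYs, hNs, hses0, hchain⟩ := id hW
  obtain ⟨f, g, wfg, hse⟩ := hses0
  haveI hmf : Mono f := hse.mono_f
  haveI heg : Epi g := hse.epi_g
  haveI : Mono i := by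
    haveI : Mono (i ≫ r) := by rw [hir]; infer_instance
    exact mono_of_mono i r
  haveI : Mono (i ≫ f) := mono_comp i f
  -- cokernel data
  have hmg : (i ≫ f) ≫ g = 0 := by rw [Category.assoc, wfg, comp_zero]
  let d : cokernel (i ≫ f) ⟶ Nk 0 := cokernel.desc (i ≫ f) g hmg
  have hπd : cokernel.π (i ≫ f) ≫ d = g := cokernel.π_desc _ _ _
  have hiπ' : i ≫ f ≫ cokernel.π (i ≫ f) = 0 := by
    rw [← Category.assoc]; exact cokernel.condition (i ≫ f)
  let β : cokernel i ⟶ cokernel (i ≫ f) :=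
    cokernel.desc i (f ≫ cokernel.π (i ≫ f)) hiπ'
  have hπβ : cokernel.π i ≫ β = f ≫ cokernel.π (i ≫ f) := cokernel.π_desc _ _ _
  haveI : Epi d := by
    haveI : Epi (cokernel.π (i ≫ f) ≫ d) := by rw [hπd]; infer_instance
    exact epi_of_epi (cokernel.π (i ≫ f)) d
  have hβd : β ≫ d = 0 := by
    rw [← cancel_epi (cokernel.π i), comp_zero, ← Category.assoc, hπβ,
      Category.assoc, hπd, wfg]
  -- g is a cokernel of f
  have hgcok : IsColimit (CokernelCofork.ofπ g wfg) := hse.gIsCokernel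
  -- d is a cokernel of β
  have hdcok : IsColimit (CokernelCofork.ofπ d hβd) := by
    refine CokernelCofork.IsColimit.ofπ' d hβd (fun {T} k hk => ?_)
    have h1 : (cokernel.π i ≫ β) ≫ k = 0 := by rw [Category.assoc, hk, comp_zero]
    rw [hπβ, Category.assoc] at h1
    obtain ⟨l, hl⟩ := CokernelCofork.IsColimit.desc' hgcok
      (cokernel.π (i ≫ f) ≫ k) h1
    have hl' : g ≫ l = cokernel.π (i ≫ f) ≫ k := hl
    refine ⟨l, ?_⟩
    rw [← cancel_epi (cokernel.π (i ≫ f)), ← Category.assoc, hπd, hl']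
  -- β is mono, via a pushout square
  have hd0 : ∀ s : PushoutCocone (cokernel.π i) f, (i ≫ f) ≫ s.inr = 0 := by
    intro s
    rw [Category.assoc, ← s.condition, ← Category.assoc, cokernel.condition,
      zero_comp]
  have hpo : IsPushout (cokernel.π i) f β (cokernel.π (i ≫ f)) := by
    refine IsPushout.of_isColimit (PushoutCocone.IsColimit.mk hπβ
      (fun s => cokernel.desc (i ≫ f) s.inr (hd0 s))
      (fun s => ?_) (fun s => ?_) (fun s t ht ht' => ?_))
    · rw [← cancel_epi (cokernel.π i), ← Category.assoc, hπβ, Category.assoc,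
        cokernel.π_desc, s.condition]
    · exact cokernel.π_desc _ _ _
    · rw [← cancel_epi (cokernel.π (i ≫ f)), ht', cokernel.π_desc]
  haveI hmβ : Mono β := by
    have h2 : β ≫ hpo.isoPushout.hom = pushout.inl _ _ := hpo.inl_isoPushout_hom
    haveI : Mono (β ≫ hpo.isoPushout.hom) := by rw [h2]; infer_instance
    exact mono_of_mono β hpo.isoPushout.hom
  -- the short exact sequence 0 → A' → Yk 0 → Cc → 0
  have hexA : (ShortComplex.mk (i ≫ f) (cokernel.π (i ≫ f))
      (cokernel.condition (i ≫ f))).Exact :=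
    ShortComplex.exact_of_g_is_cokernel _ (cokernelIsCokernel (i ≫ f))
  have hses1 : SES A' (Yk 0) (cokernel (i ≫ f)) :=
    ⟨i ≫ f, cokernel.π (i ≫ f), cokernel.condition (i ≫ f),
      ShortComplex.ShortExact.mk' hexA inferInstance inferInstance⟩
  -- splitting iso  W ≅ cokernel i ⊞ A'
  have hs0 : i ≫ (𝟙 W - r ≫ i) = 0 := by
    rw [Preadditive.comp_sub, Category.comp_id, ← Category.assoc, hir, Category.id_comp, sub_self]
  let s' : cokernel i ⟶ W := cokernel.desc i (𝟙 W - r ≫ i) hs0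
  have hπs : cokernel.π i ≫ s' = 𝟙 W - r ≫ i := cokernel.π_desc _ _ _
  have hsπ : s' ≫ cokernel.π i = 𝟙 (cokernel i) := by
    rw [← cancel_epi (cokernel.π i), ← Category.assoc, hπs]
    simp [cokernel.condition]
  have hsr : s' ≫ r = 0 := by
    rw [← cancel_epi (cokernel.π i), ← Category.assoc, hπs]
    simp [hir]
  let e : W ≅ cokernel i ⊞ A' :=
    { hom := biprod.lift (cokernel.π i) r
      inv := biprod.desc s' i
      hom_inv_id := by rw [biprod.lift_desc, hπs]; simp
      inv_hom_id := by
        apply biprod.hom_ext' <;> apply biprod.hom_ext <;>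
          simp [hsπ, hsr, hir, cokernel.condition] }
  -- the middle complex  cokernel i ⊞ A' → cokernel (i≫f) ⊞ A' → Nk 0
  have w3 : biprod.map β (𝟙 A') ≫ biprod.fst ≫ d = 0 := by
    rw [← Category.assoc, biprod.map_fst, Category.assoc, hβd, comp_zero]
  haveI : Mono (biprod.map β (𝟙 A')) := by
    refine Preadditive.mono_of_cancel_zero _ (fun {T} u hu => ?_)
    have h1 : (u ≫ biprod.fst) ≫ β = 0 := by
      rw [Category.assoc, ← biprod.map_fst, ← Category.assoc, hu, zero_comp]
    have h1' : u ≫ biprod.fst = 0 := zero_of_comp_mono β h1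
    have h2 : (u ≫ biprod.snd) ≫ 𝟙 A' = 0 := by
      rw [Category.assoc, ← biprod.map_snd, ← Category.assoc, hu, zero_comp]
    have h2' : u ≫ biprod.snd = 0 := by simpa using h2
    apply biprod.hom_ext
    · rw [h1', zero_comp]
    · rw [h2', zero_comp]
  haveI : Epi (biprod.fst : cokernel (i ≫ f) ⊞ A' ⟶ cokernel (i ≫ f)) := by
    haveI : Epi (biprod.inl ≫ (biprod.fst : cokernel (i ≫ f) ⊞ A' ⟶ _)) := by
      rw [biprod.inl_fst]; infer_instance
    exact epi_of_epi biprod.inl biprod.fst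
  haveI : Epi ((biprod.fst : cokernel (i ≫ f) ⊞ A' ⟶ _) ≫ d) := epi_comp _ _
  -- fst ≫ d is a cokernel of biprod.map β 𝟙
  have hcok3 : IsColimit (CokernelCofork.ofπ (biprod.fst ≫ d) w3) := by
    refine CokernelCofork.IsColimit.ofπ' _ w3 (fun {T} k hk => ?_)
    have hβk : β ≫ biprod.inl ≫ k = 0 := by
      rw [← Category.assoc, ← biprod.inl_map β (𝟙 A'), Category.assoc, hk,
        comp_zero]
    have hik : biprod.inr ≫ k = 0 := by
      have h4 : (biprod.inr ≫ biprod.map β (𝟙 A')) ≫ k = 0 := by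
        rw [Category.assoc, hk, comp_zero]
      simpa [biprod.inr_map] using h4
    obtain ⟨t, ht⟩ := CokernelCofork.IsColimit.desc' hdcok (biprod.inl ≫ k) hβk
    have ht' : d ≫ t = biprod.inl ≫ k := ht
    refine ⟨t, ?_⟩
    apply biprod.hom_ext'
    · simp [ht']
    · simp [hik]
  -- the sum object is in the class
  have hPsum : PairVeeInf X Y (cokernel (i ≫ f) ⊞ A') := by
    rcases hNs 0 with hXN | hzN
    · -- nonzero case: use extension closedness
      have hPN : PairVeeInf X Y (Nk 0) :=
        pairVeeInf_tail X Y ⟨hYs, hNs, ⟨f, g, wfg, hse⟩, hchain⟩ hXN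
      have hex3 : (ShortComplex.mk (biprod.map β (𝟙 A')) (biprod.fst ≫ d)
          w3).Exact := ShortComplex.exact_of_g_is_cokernel _ hcok3
      have hse3 : (ShortComplex.mk (biprod.map β (𝟙 A')) (biprod.fst ≫ d)
          w3).ShortExact := ShortComplex.ShortExact.mk' hex3 inferInstance
          inferInstance
      have hSES : SES W (cokernel (i ≫ f) ⊞ A') (Nk 0) :=
        ⟨e.hom ≫ biprod.map β (𝟙 A'), biprod.fst ≫ d,
          isSES_iso_left e ⟨w3, hse3⟩⟩
      exact hext hSES hW hPN
    · -- zero case: β is an isomorphism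
      have hd0' : d = 0 := hzN.eq_of_tgt d 0
      haveI : Epi β := by
        refine Preadditive.epi_of_cancel_zero _ (fun {T} u hu => ?_)
        obtain ⟨t, ht⟩ := CokernelCofork.IsColimit.desc' hdcok u hu
        have ht' : d ≫ t = u := ht
        rw [← ht', hd0', zero_comp]
      haveI : IsIso β := isIso_of_mono_of_epi β
      exact pairVeeInf_iso X Y hXsmd
        ((biprod.mapIso (asIso β).symm (Iso.refl A')) ≪≫ e.symm) hW
  have hXCc : X (cokernel (i ≫ f)) :=
    hXsmd (cokernel (i ≫ f)) (cokernel (i ≫ f) ⊞ A') hPsum.1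
      ⟨biprod.inl, biprod.fst, biprod.inl_fst⟩
  exact ⟨Yk 0, cokernel (i ≫ f), hYs 0, hXCc, hses1, hPsum⟩

/-- Auxiliary state for the iterative construction in `stmt4`. -/
structure AuxState (X Y : C → Prop) where
  A' : C
  W : C
  i : A' ⟶ W
  r : W ⟶ A'
  hir : i ≫ r = 𝟙 A'
  hW : PairVeeInf X Y W

end Stmt4Aux

theorem stmt4 (X Y : C → Prop)
    (hXsmd : SmdClosed X) (hext : ExtClosed (PairVeeInf X Y)) :
    SmdClosed (PairVeeInf X Y) := by
  intro A V hV hsum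
  obtain ⟨i, r, hir⟩ := hsum
  refine ⟨hXsmd A V hV.1 ⟨i, r, hir⟩, ?_⟩
  have hstep := fun (s : AuxState X Y) =>
    step_aux X Y hXsmd hext s.hW s.i s.r s.hir
  choose Yc Cc h1 h2 h3 h4 using hstep
  let next : AuxState X Y → AuxState X Y := fun s =>
    ⟨Cc s, Cc s ⊞ s.A', biprod.inl, biprod.fst, biprod.inl_fst, h4 s⟩
  let s0 : AuxState X Y := ⟨A, V, i, r, hir, hV⟩
  let seq : ℕ → AuxState X Y := fun n => next^[n] s0
  refine ⟨fun n => Yc (seq n), fun n => Cc (seq n), fun n => h1 (seq n),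
    fun n => Or.inl (h2 (seq n)), ?_, fun k => ?_⟩
  · exact h3 s0
  · have hsucc : seq (k + 1) = next (seq k) := Function.iterate_succ_apply' next k s0
    show SES (Cc (seq k)) (Yc (seq (k + 1))) (Cc (seq (k + 1)))
    rw [hsucc]
    exact h3 (next (seq k))

end RelTilting
end

section
/- Let C be an abelian category, X, T ⊆ C, n ≥ 1, and α ⊆ T^⊥ ∩ X^⊥ a relative cogenerator in X (every X₀ ∈ X fits in a short exact sequence 0 → X₀ → I → X' → 0 with I ∈ α, X' ∈ X). Then X ∩ T^⊥ is closed by n-quotients in X if and only if pd_X(T) ≤ n. -/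
open CategoryTheory CategoryTheory.Limits CategoryTheory.Abelian ZeroObject

universe w v u

namespace RelTilting

variable {C : Type u} [Category.{v} C] [Abelian C]

variable [HasExt.{w} C]

private lemma subsingleton_of_all_zero {A B : C} {n : ℕ} (h : ∀ x : Ext A B n, x = 0) :
    Subsingleton (Ext A B n) := ⟨fun a b => by rw [h a, h b]⟩

private lemma shiftA' {S : ShortComplex C} (hS : S.ShortExact) (M : C) (j : ℕ)
    (h2 : Subsingleton (Ext M S.X₂ j)) (h1 : Subsingleton (Ext M S.X₁ (j+1))) :
    Subsingleton (Ext M S.X₃ j) := by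
  haveI := h1; haveI := h2
  refine subsingleton_of_all_zero (fun x₃ => ?_)
  obtain ⟨x₂, hx₂⟩ := Ext.covariant_sequence_exact₃ M hS x₃ rfl (Subsingleton.elim _ 0)
  rw [← hx₂, Subsingleton.elim x₂ 0, Ext.zero_comp]

private lemma shiftB' {S : ShortComplex C} (hS : S.ShortExact) (M : C) (j : ℕ)
    (h3 : Subsingleton (Ext M S.X₃ j)) (h2 : Subsingleton (Ext M S.X₂ (j+1))) :
    Subsingleton (Ext M S.X₁ (j+1)) := by
  haveI := h3; haveI := h2
  refine subsingleton_of_all_zero (fun x₁ => ?_)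
  obtain ⟨x₃, hx₃⟩ := Ext.covariant_sequence_exact₁ M hS x₁ (Subsingleton.elim _ 0) rfl
  rw [← hx₃, Subsingleton.elim x₃ 0, Ext.zero_comp]

private lemma SES.shiftA {A B D : C} (h : SES A B D) (M : C) (j : ℕ)
    (h2 : Subsingleton (Ext M B j)) (h1 : Subsingleton (Ext M A (j+1))) :
    Subsingleton (Ext M D j) := by
  obtain ⟨f, g, w, hse⟩ := h
  exact shiftA' hse M j h2 h1

private lemma SES.shiftB {A B D : C} (h : SES A B D) (M : C) (j : ℕ)
    (h3 : Subsingleton (Ext M D j)) (h2 : Subsingleton (Ext M B (j+1))) :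
    Subsingleton (Ext M A (j+1)) := by
  obtain ⟨f, g, w, hse⟩ := h
  exact shiftB' hse M j h3 h2

private lemma cores_chain (α X : C → Prop) (hcog : RelCogen α X) (X0 : C) (h0 : X X0) :
    ∀ m : ℕ, ∃ Xs Is : ℕ → C, Xs 0 = X0 ∧ (∀ j, X (Xs j)) ∧
      ∀ j, j < m → α (Is j) ∧ SES (Xs j) (Is j) (Xs (j+1))
  | 0 => ⟨fun _ => X0, fun _ => X0, rfl, fun _ => h0, fun j hj => absurd hj (Nat.not_lt_zero j)⟩
  | (m+1) => by
    obtain ⟨Xs, Is, h1, h2, h3⟩ := cores_chain α X hcog X0 h0 m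
    obtain ⟨I, X'', hI, hX'', hses⟩ := hcog.2 (Xs m) (h2 m)
    refine ⟨fun j => if j ≤ m then Xs j else X'', fun j => if j < m then Is j else I, ?_, ?_, ?_⟩
    · simpa using h1
    · intro j
      by_cases hj : j ≤ m
      · simpa [hj] using h2 j
      · simpa [hj] using hX''
    · intro j hj
      by_cases hjm : j < m
      · have e1 : j ≤ m := le_of_lt hjm
        have e2 : j + 1 ≤ m := hjm
        simpa [hjm, e1, e2] using h3 j hjm
      · have hjem : j = m := by omega
        subst hjem
        have e2 : ¬ (j + 1 ≤ j) := by omega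
        simpa [hjm, e2] using ⟨hI, hses⟩

theorem stmt7 (X T α : C → Prop) (n : ℕ) (hn : 1 ≤ n)
    (hα : ∀ I, α I → rightPerp T I ∧ rightPerp X I)
    (hcog : RelCogen α X) :
    ClosedByNQuotients (fun Z => X Z ∧ rightPerp T Z) X n ↔ pdLE T X n := by
  constructor
  · -- closed by n-quotients → pd_X(T) ≤ n
    intro hcl M hM X' hX' k hk
    obtain ⟨Xs, Is, hX0, hXmem, hstep⟩ := cores_chain α X hcog X' hX' n
    -- apply closedness to the chain K i = Xs (n - i)
    have hKn : X (Xs n) ∧ rightPerp T (Xs n) := by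
      refine hcl (fun i => Xs (n - i)) (fun i => Is (n - i)) (hXmem n) ?_
      intro i h1i hin
      obtain ⟨hαI, hses⟩ := hstep (n - i) (by omega)
      refine ⟨⟨hcog.1 _ hαI, (hα _ hαI).1⟩, hXmem _, ?_⟩
      show SES (Xs (n - i)) (Is (n - i)) (Xs (n - (i - 1)))
      have e : n - (i - 1) = n - i + 1 := by omega
      rw [e]
      exact hses
    -- dimension shifting down
    have key : ∀ d, d ≤ n → Subsingleton (Ext M (Xs (n - d)) (k - (n - d))) := by
      intro d
      induction d with
      | zero => intro _; exact hKn.2 M hM (k - n) (by omega)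
      | succ d ih =>
        intro hd
        obtain ⟨hαI, hses⟩ := hstep (n - (d+1)) (by omega)
        have e1 : n - (d+1) + 1 = n - d := by omega
        rw [e1] at hses
        have h3 := ih (by omega)
        have h2 : Subsingleton (Ext M (Is (n - (d+1))) ((k - (n - d)) + 1)) :=
          (hα _ hαI).1 M hM _ (by omega)
        have hres := SES.shiftB hses M (k - (n - d)) h3 h2
        have e2 : (k - (n - d)) + 1 = k - (n - (d+1)) := by omega
        rw [e2] at hres
        exact hres
    have hfin := key n le_rfl
    rw [Nat.sub_self, hX0, Nat.sub_zero] at hfin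
    exact hfin
  · -- pd_X(T) ≤ n → closed by n-quotients
    intro hpd K Ymid hK0 hch
    refine ⟨hK0, fun M hM j hj => ?_⟩
    have key : ∀ d, d ≤ n → ∀ i, n - d < i → Subsingleton (Ext M (K (n - d)) i) := by
      intro d
      induction d with
      | zero => intro _ i hi; exact hpd M hM (K n) (hch n hn le_rfl).2.1 i (by omega)
      | succ d ih =>
        intro hd i hi
        obtain ⟨hY, hKX, hses⟩ := hch (n - d) (by omega) (by omega)
        have e : n - d - 1 = n - (d+1) := by omega
        rw [e] at hses
        have h2 : Subsingleton (Ext M (Ymid (n - d)) i) := hY.2 M hM i (by omega)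
        have h1 : Subsingleton (Ext M (K (n - d)) (i+1)) := ih (by omega) (i+1) (by omega)
        exact SES.shiftA hses M i h2 h1
    have hfin := key n le_rfl j (by omega)
    rwa [Nat.sub_self] at hfin

end RelTilting
end

section
/- Let C be an abelian category and X, T ⊆ C. Then pd_X of the class T^∨ (objects with a finite coresolution by T) equals pd_X(T); consequently T^∨_X ∩ X ⊆ T^∨ ⊆ ^⊥(T^⊥) ⊆ ^⊥(T^⊥ ∩ X). -/
open CategoryTheory CategoryTheory.Limits CategoryTheory.Abelian ZeroObject

universe w v u

namespace RelTilting

variable {C : Type u} [Category.{v} C] [Abelian C]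

variable [HasExt.{w} C]

private lemma sandwich {S : ShortComplex C} (hS : S.ShortExact) (Y : C) (k : ℕ)
    (h2 : Subsingleton (Ext S.X₂ Y k)) (h3 : Subsingleton (Ext S.X₃ Y (k+1))) :
    Subsingleton (Ext S.X₁ Y k) := by
  have ha : ∀ x : Ext S.X₁ Y k, x = 0 := by
    intro x
    obtain ⟨x₂, hx₂⟩ := Ext.contravariant_sequence_exact₁ hS Y x
      (by omega : 1 + k = k + 1) (Subsingleton.elim _ _)
    rw [← hx₂, Subsingleton.elim x₂ 0, Ext.comp_zero]
  exact ⟨fun a b => by rw [ha a, ha b]⟩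

private lemma key (T : C → Prop) (n₀ : ℕ) (Y : C)
    (hT : ∀ T', T T' → ∀ k, n₀ < k → Subsingleton (Ext T' Y k)) :
    ∀ (n : ℕ) (M : C), CoresLen T (fun _ => True) n M →
      ∀ k, n₀ < k → Subsingleton (Ext M Y k) := by
  intro n
  induction n with
  | zero => intro M hM k hk; exact hT M hM.1 k hk
  | succ n ih =>
    rintro M ⟨Y0, N0, hY0, -, ⟨f, g, w, hse⟩, hN0⟩ k hk
    exact sandwich hse Y k (hT Y0 hY0 k hk) (ih N0 hN0 (k+1) (by omega))

omit [HasExt.{w} C] in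
private lemma weaken (T X : C → Prop) :
    ∀ (n : ℕ) (M : C), CoresLen T X n M → CoresLen T (fun _ => True) n M := by
  intro n
  induction n with
  | zero => intro M hM; exact ⟨hM.1, trivial⟩
  | succ n ih =>
    rintro M ⟨Y0, N0, hY0, hN0X, hses, hN0⟩
    exact ⟨Y0, N0, hY0, trivial, hses, ih N0 hN0⟩

theorem stmt8 (X T : C → Prop) :
    (∀ n : ℕ, pdLE (Vee T) X n ↔ pdLE T X n) ∧
    (∀ M, VeeRel T X M → X M → Vee T M) ∧
    (∀ M, Vee T M → leftPerp (rightPerp T) M) ∧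
    (∀ M, leftPerp (rightPerp T) M → leftPerp (fun B => rightPerp T B ∧ X B) M) := by
  refine ⟨fun n => ⟨fun h M hM X' hX' k hk => h M ⟨0, hM, trivial⟩ X' hX' k hk,
    fun h M hM X' hX' k hk => ?_⟩,
    fun M hM hMX => ?_, fun M hM B hB i hi => ?_, fun M hM B hB => hM B hB.1⟩
  · obtain ⟨m, hm⟩ := hM
    exact key T n X' (fun T' hT' => h T' hT' X' hX') m M hm k hk
  · obtain ⟨m, hm⟩ := hM
    exact ⟨m, weaken T X m M hm⟩
  · obtain ⟨m, hm⟩ := hM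
    exact key T 0 B (fun T' hT' k hk => hB T' hT' k hk) m M hm i hi

end RelTilting
end

section
/- Let C be an abelian category, X ⊆ C closed under direct summands, and T ⊆ C closed under direct summands with T ∩ X ⊆ T^⊥. Then (T∩X)^∨_X ∩ T^⊥ = T ∩ X. -/
open CategoryTheory CategoryTheory.Limits CategoryTheory.Abelian ZeroObject

universe w v u

namespace RelTilting

variable {C : Type u} [Category.{v} C] [Abelian C]

variable [HasExt.{w} C]

/-! Dimension shifting along a `(T ∩ X)`-coresolution shows that its objects are
left-orthogonal to `T^⊥`. So if `M ∈ T^⊥` has such a coresolution starting with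
`0 → M → Y₀ → N₀ → 0`, then `Ext¹(N₀, M) = 0`, the first sequence splits,
and `M` is a direct summand of `Y₀ ∈ T ∩ X`. -/

lemma extVanish_of_ses {N Y N' M : C} (hS : SES N Y N') (hY : extVanish Y M)
    (hN' : extVanish N' M) : extVanish N M := by
  obtain ⟨f, g, w, hS⟩ := hS
  intro i hi
  refine ⟨fun a b => ?_⟩
  suffices h : ∀ x : Ext N M i, x = 0 by rw [h a, h b]
  intro x
  obtain ⟨y, rfl⟩ := Ext.contravariant_sequence_exact₁ hS M x (add_comm 1 i)
    (@Subsingleton.elim _ (hN' (i + 1) (by omega)) _ _)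
  rw [@Subsingleton.elim _ (hY i hi) y 0, Ext.comp_zero]

lemma extVanish_of_coresLen {B A : C → Prop} {M : C} (hB : ∀ Y, B Y → extVanish Y M) :
    ∀ n N, CoresLen B A n N → extVanish N M
  | 0, _, hN => hB _ hN.1
  | n + 1, _, ⟨_, _, hY, _, hS, hN'⟩ =>
    extVanish_of_ses hS (hB _ hY) (extVanish_of_coresLen hB n _ hN')

lemma IsSES.exists_retraction {A B D : C} {f : A ⟶ B} {g : B ⟶ D} (hS : IsSES f g)
    (hExt : Subsingleton (Ext.{w} D A 1)) : ∃ r : B ⟶ A, f ≫ r = 𝟙 A := by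
  obtain ⟨w, hS⟩ := hS
  -- `Hom(B, A) → Hom(A, A) → Ext¹(D, A)` is exact, so `𝟙 A` lifts along `f`.
  obtain ⟨x, hx⟩ := Ext.contravariant_sequence_exact₁ hS A (Ext.mk₀ (𝟙 A)) (add_zero 1)
    (Subsingleton.elim _ _)
  refine ⟨Ext.homEquiv₀ x, (Ext.mk₀_bijective A A).1 ?_⟩
  rw [← hx, ← Ext.mk₀_comp_mk₀, Ext.mk₀_homEquiv₀_apply]

lemma SmdClosed.of_ses {P : C → Prop} (hP : SmdClosed P) {A B D : C} (hS : SES A B D)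
    (hB : P B) (hExt : Subsingleton (Ext.{w} D A 1)) : P A := by
  obtain ⟨f, g, hS⟩ := hS
  exact hP A B hB ⟨f, hS.exists_retraction hExt⟩

theorem stmt9 (X T : C → Prop)
    (hXsmd : SmdClosed X) (hTsmd : SmdClosed T)
    (hT2 : ∀ M, T M → X M → rightPerp T M) :
    ∀ M : C, (VeeRel (fun A => T A ∧ X A) X M ∧ rightPerp T M) ↔ (T M ∧ X M) := by
  intro M
  constructor
  · rintro ⟨⟨_ | n, hM⟩, hperp⟩
    · exact hM.1
    obtain ⟨Y, N, hY, -, hS, hN⟩ := hM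
    have hExt : Subsingleton (Ext N M 1) :=
      extVanish_of_coresLen (fun Y hY => hperp Y hY.1) n N hN 1 le_rfl
    exact ⟨hTsmd.of_ses hS hY.1 hExt, hXsmd.of_ses hS hY.2 hExt⟩
  · rintro ⟨hT, hX⟩
    exact ⟨⟨0, ⟨hT, hX⟩, hX⟩, hT2 M hT hX⟩

end RelTilting
end

section
/- Let C be an abelian category and X ⊆ C closed under extensions. If T ⊆ C admits a relative generator ω in X with ω ⊆ T^∨_X (condition T3), then T^⊥ ∩ X ⊆ Fac^X_1(T), i.e. every A ∈ T^⊥ ∩ X admits a short exact sequence 0 → K → B → A → 0 with B ∈ T ∩ X and K ∈ X. -/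
open CategoryTheory CategoryTheory.Limits CategoryTheory.Abelian ZeroObject

universe w v u

namespace RelTilting

variable {C : Type u} [Category.{v} C] [Abelian C]

lemma IsSES.kernel_ι {Y A : C} (k : Y ⟶ A) [Epi k] : IsSES (kernel.ι k) k :=
  ⟨kernel.condition k,
    .mk' (ShortComplex.exact_of_f_is_kernel _ (kernelIsKernel k)) inferInstance ‹_›⟩

lemma SES.of_iso {A B D A' B' D' : C} (e₁ : A ≅ A') (e₂ : B ≅ B') (e₃ : D ≅ D')
    (h : SES A B D) : SES A' B' D' := by
  obtain ⟨f, g, w, hS⟩ := h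
  refine ⟨e₁.inv ≫ f ≫ e₂.hom, e₂.inv ≫ g ≫ e₃.hom, by simp [reassoc_of% w], ?_⟩
  exact ShortComplex.shortExact_of_iso (ShortComplex.isoMk e₁ e₂ e₃) hS

lemma SES.kernel_of_comp_eq {X' W Y N A : C} {i : X' ⟶ W} {p : W ⟶ A} (h₁ : IsSES i p)
    {f : W ⟶ Y} {g : Y ⟶ N} (h₂ : IsSES f g) {k : Y ⟶ A} (hk : f ≫ k = p) :
    SES X' (kernel k) N := by
  obtain ⟨w₁, h₁⟩ := h₁
  obtain ⟨w₂, h₂⟩ := h₂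
  subst hk
  have := h₁.mono_f
  have := h₂.epi_g
  have : Epi (f ≫ k) := h₁.epi_g
  have : Mono f := h₂.mono_f
  have hE := kernelCokernelCompSequence_exact f k
  -- `ker (f ≫ k) ⟶ ker k ⟶ coker f` is short exact because `ker f = 0` and `coker (f ≫ k) = 0`.
  have : Mono ((kernelCokernelCompSequence f k).map' 1 2) :=
    (hE.exact 0).mono_g ((isZero_kernel_of_mono f).eq_of_src _ _)
  have : Epi ((kernelCokernelCompSequence f k).map' 2 3) :=
    (hE.exact 2).epi_f ((isZero_cokernel_of_epi (f ≫ k)).eq_of_tgt _ _)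
  exact SES.of_iso
    (IsLimit.conePointUniqueUpToIso (kernelIsKernel _) h₁.exact.fIsKernel) (Iso.refl _)
    (IsColimit.coconePointUniqueUpToIso (cokernelIsCokernel _) h₂.exact.gIsCokernel)
    ⟨_, _, _, .mk' (hE.exact 1) ‹_› ‹_›⟩

variable [HasExt.{w} C]

lemma CoresLen.extVanish_of_rightPerp {T X : C → Prop} {A : C} (hA : rightPerp T A) :
    ∀ {n : ℕ} {M : C}, CoresLen T X n M → extVanish M A
  | 0, M, hM => hA M hM.1
  | n + 1, M, ⟨Y, N, hY, _, ⟨_, _, _, hS⟩, hN⟩ => fun i hi => by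
    have := hN.extVanish_of_rightPerp hA (1 + i) (by omega)
    have := hA Y hY i hi
    refine subsingleton_of_forall_eq 0 fun x => ?_
    obtain ⟨y, rfl⟩ := Ext.contravariant_sequence_exact₁ hS A x rfl (Subsingleton.elim _ _)
    rw [Subsingleton.elim y 0, Ext.comp_zero]

lemma IsSES.exists_comp_eq {W Y N : C} {f : W ⟶ Y} {g : Y ⟶ N} (h : IsSES f g) {A : C}
    [Subsingleton (Ext.{w} N A 1)] (u : W ⟶ A) : ∃ k : Y ⟶ A, f ≫ k = u := by
  obtain ⟨_, hS⟩ := h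
  obtain ⟨x, hx⟩ := Ext.contravariant_sequence_exact₁ hS A (Ext.mk₀ u) rfl (Subsingleton.elim _ _)
  obtain ⟨k, rfl⟩ := (Ext.mk₀_bijective _ _).2 x
  exact ⟨k, (Ext.mk₀_bijective _ _).1 (by rwa [Ext.mk₀_comp_mk₀] at hx)⟩

theorem stmt10 (X T ω : C → Prop) (hXext : ExtClosed X)
    (hgen : RelGen ω X) (hsub : ∀ W, ω W → VeeRel T X W) :
    ∀ A, rightPerp T A → X A → Fac T X 1 A := by
  intro A hA hXA
  obtain ⟨X', W, hX', hW, i, p, hip⟩ := hgen.2 A hXA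
  obtain ⟨_ | n, hWcores⟩ := hsub W hW
  · exact ⟨X', W, hX', hWcores, ⟨i, p, hip⟩, trivial⟩
  obtain ⟨Y, N, hY, hN, ⟨f, g, hfg⟩, hNcores⟩ := hWcores
  have := hNcores.extVanish_of_rightPerp hA 1 le_rfl
  obtain ⟨k, hk⟩ := hfg.exists_comp_eq p
  have : Epi p := hip.2.epi_g
  have : Epi k := epi_of_epi_fac hk
  have hK : X (kernel k) := hXext (SES.kernel_of_comp_eq hip hfg hk) hX' hN
  have hXY : X Y := hXext ⟨f, g, hfg⟩ (hgen.1 W hW) hN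
  exact ⟨kernel k, Y, hK, ⟨hY, hXY⟩, ⟨_, _, IsSES.kernel_ι k⟩, trivial⟩

end RelTilting
end
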